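/- arXiv:2102.08610 — 6 statements merged into one kernel-verified Lean document; each statement's English description precedes it below -/
import Mathlib

section
/- (Proposition 2) Let f : ℝ → ℝ be twice continuously differentiable, strictly concave, and strictly increasing. Suppose L ∈ ℝ satisfies Σ_{i∈V_t} clamp(r̄_i·(L − ℓ_i(t) + 1), 0, min(r̄_i, e_i(t))) = min(P(t), Σ_{i∈V_t} min(r̄_i, e_i(t))). Then the rate vector r*_i(t) = clamp(r̄_i·(L − ℓ_i(t) + 1), 0, min(r̄_i, e_i(t))), i ∈ V_t, is an optimal solution of the problem: maximize Σ_{i∈V_t} r̄_i·f(ℓ_i(t) − 1 + r_i(t)/r̄_i) over all feasible rate vectors. -/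
/-- `clamp x lo hi` is the projection of `x` onto the interval `[lo, hi]`. -/
noncomputable def clamp (x lo hi : ℝ) : ℝ := min (max x lo) hi

/-- Tangent line inequality for a differentiable concave function. -/
lemma tangent_le {f : ℝ → ℝ} (hconc : ConcaveOn ℝ Set.univ f)
    (hd : Differentiable ℝ f) (x y : ℝ) :
    f y - f x ≤ deriv f x * (y - x) := by
  rcases lt_trichotomy x y with h | h | h
  · have hs := hconc.slope_le_deriv (Set.mem_univ x) (Set.mem_univ y) h (hd x)
    rw [slope_def_field, div_le_iff₀ (by linarith)] at hs
    · linarith [hs]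
  · simp [h]
  · have hs := hconc.deriv_le_slope (Set.mem_univ y) (Set.mem_univ x) h (hd x)
    rw [slope_def_field, le_div_iff₀ (by linarith)] at hs
    nlinarith [hs]

/-- Proposition 2: if the threshold `L` satisfies the water-filling equation,
then the clamped rate vector `r*_i = clamp(r̄_i (L − ℓ_i + 1), 0, min(r̄_i, e_i))` is an
optimal solution of maximizing `Σ_i r̄_i f(ℓ_i − 1 + r_i/r̄_i)` over feasible rate vectors. -/
theorem stmt_3 {n : ℕ} (rbar e ℓ : Fin n → ℝ) (P : ℝ)
    (hrbar : ∀ i, 0 < rbar i) (he : ∀ i, 0 ≤ e i) (hP : 0 ≤ P)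
    (f : ℝ → ℝ) (hf : ContDiff ℝ 2 f)
    (hconc : StrictConcaveOn ℝ Set.univ f) (hmono : StrictMono f)
    (L : ℝ)
    (hL : ∑ i, clamp (rbar i * (L - ℓ i + 1)) 0 (min (rbar i) (e i))
        = min P (∑ i, min (rbar i) (e i))) :
    (∀ i, 0 ≤ clamp (rbar i * (L - ℓ i + 1)) 0 (min (rbar i) (e i)) ∧
          clamp (rbar i * (L - ℓ i + 1)) 0 (min (rbar i) (e i)) ≤ min (rbar i) (e i)) ∧
    (∑ i, clamp (rbar i * (L - ℓ i + 1)) 0 (min (rbar i) (e i)) ≤ P) ∧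
    (∀ r : Fin n → ℝ,
      (∀ i, 0 ≤ r i ∧ r i ≤ min (rbar i) (e i)) → (∑ i, r i ≤ P) →
      ∑ i, rbar i * f (ℓ i - 1 + r i / rbar i)
        ≤ ∑ i, rbar i *
            f (ℓ i - 1 + clamp (rbar i * (L - ℓ i + 1)) 0 (min (rbar i) (e i)) / rbar i)) := by
  have hd : Differentiable ℝ f := hf.differentiable (by norm_num)
  have hcc : ConcaveOn ℝ Set.univ f := hconc.concaveOn
  have hanti : AntitoneOn (deriv f) Set.univ :=
    hcc.antitoneOn_deriv (fun x _ => hd x)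
  set s : Fin n → ℝ := fun i => clamp (rbar i * (L - ℓ i + 1)) 0 (min (rbar i) (e i)) with hs
  have hm : ∀ i, 0 ≤ min (rbar i) (e i) := fun i => le_min (hrbar i).le (he i)
  have hfeas : ∀ i, 0 ≤ s i ∧ s i ≤ min (rbar i) (e i) := by
    intro i
    refine ⟨le_min (le_max_right _ _) (hm i), min_le_right _ _⟩
  refine ⟨hfeas, ?_, ?_⟩
  · rw [hL]; exact min_le_left _ _
  intro r hr hrP
  -- derivative at L is nonneg
  have hderivL : 0 ≤ deriv f L := by
    have hs1 := hcc.slope_le_deriv (Set.mem_univ L) (Set.mem_univ (L + 1))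
      (by linarith) (hd L)
    have : 0 < slope f L (L + 1) := by
      rw [slope_def_field]
      have h1 : f L < f (L + 1) := hmono (by linarith)
      have h2 : L + 1 - L = 1 := by ring
      rw [h2, div_one]
      linarith
    linarith
  -- per-index inequality
  have key : ∀ i, rbar i * f (ℓ i - 1 + r i / rbar i)
      - rbar i * f (ℓ i - 1 + s i / rbar i) ≤ deriv f L * (r i - s i) := by
    intro i
    set xi := ℓ i - 1 + s i / rbar i with hxi
    set yi := ℓ i - 1 + r i / rbar i with hyi
    have hri := hrbar i
    have htan := tangent_le hcc hd xi yi
    have hdiff : yi - xi = (r i - s i) / rbar i := by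
      rw [hxi, hyi]; field_simp; ring
    have h1 : rbar i * f yi - rbar i * f xi ≤ deriv f xi * (r i - s i) := by
      have hh := mul_le_mul_of_nonneg_left htan hri.le
      rw [hdiff] at hh
      have heq : rbar i * (deriv f xi * ((r i - s i) / rbar i))
          = deriv f xi * (r i - s i) := by
        field_simp
      calc rbar i * f yi - rbar i * f xi = rbar i * (f yi - f xi) := by ring
        _ ≤ rbar i * (deriv f xi * ((r i - s i) / rbar i)) := hh
        _ = deriv f xi * (r i - s i) := heq
    refine h1.trans ?_
    set t := rbar i * (L - ℓ i + 1) with ht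
    have hsval : s i = min (max t 0) (min (rbar i) (e i)) := rfl
    rcases le_total t 0 with h0 | h0
    · -- s i = 0, xi = ℓ i - 1 ≥ L
      have hsz : s i = 0 := by rw [hsval, max_eq_right h0, min_eq_left (hm i)]
      have hLle : L ≤ xi := by
        rw [hxi, hsz]
        simp only [zero_div, add_zero]
        nlinarith [h0, ht, hri]
      have hdle : deriv f xi ≤ deriv f L :=
        hanti (Set.mem_univ L) (Set.mem_univ xi) hLle
      have hrnn : 0 ≤ r i - s i := by rw [hsz]; simpa using (hr i).1
      exact mul_le_mul_of_nonneg_right hdle hrnn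
    · rcases le_total t (min (rbar i) (e i)) with h1' | h1'
      · -- s i = t, xi = L
        have hst : s i = t := by rw [hsval, max_eq_left h0, min_eq_left h1']
        have hxL : xi = L := by
          rw [hxi, hst, ht]; field_simp; ring
        rw [hxL]
      · -- s i = min, xi ≤ L
        have hst : s i = min (rbar i) (e i) := by
          rw [hsval, max_eq_left h0, min_eq_right h1']
        have hxle : xi ≤ L := by
          rw [hxi, hst]
          have hq : min (rbar i) (e i) / rbar i ≤ t / rbar i :=
            div_le_div_of_nonneg_right h1' hri.le
          have ht2 : t / rbar i = L - ℓ i + 1 := by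
            rw [ht, mul_div_cancel_left₀ _ hri.ne']
          linarith
        have hdge : deriv f L ≤ deriv f xi :=
          hanti (Set.mem_univ xi) (Set.mem_univ L) hxle
        have hrnp : r i - s i ≤ 0 := by rw [hst]; linarith [(hr i).2]
        exact mul_le_mul_of_nonpos_right hdge hrnp
  -- sum up
  have hsum : ∑ i, r i ≤ ∑ i, s i := by
    rw [hL]
    exact le_min hrP (Finset.sum_le_sum fun i _ => (hr i).2)
  have h2 : ∑ i, (rbar i * f (ℓ i - 1 + r i / rbar i)
      - rbar i * f (ℓ i - 1 + s i / rbar i)) ≤ deriv f L * ∑ i, (r i - s i) := by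
    rw [Finset.mul_sum]
    exact Finset.sum_le_sum fun i _ => key i
  have h3 : deriv f L * ∑ i, (r i - s i) ≤ 0 := by
    apply mul_nonpos_of_nonneg_of_nonpos hderivL
    rw [Finset.sum_sub_distrib]
    linarith
  rw [Finset.sum_sub_distrib] at h2
  linarith
end

section
/- (Lemma 1, persistence) Suppose the charging rates are generated by the sLLF algorithm on an instance I. If at some time t two EVs i, j with a_i ≤ t and a_j ≤ t satisfy ℓ_i(t) ≤ ℓ_j(t) and ℓ_i(t+1) > ℓ_j(t+1), then exactly one of the following holds: (a) t ≥ d_i and r_i(t) = 0; or (b) t < d_i, t < d_j, e_j(t+1) = 0, and r_i(t) ≠ 0. -/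
/-- Remaining energy demand at time `t`: `e_i(t) = e_i − Σ_{τ<t} r_i(τ)`. -/
noncomputable def erem (e : ℝ) (r : ℕ → ℝ) (t : ℕ) : ℝ :=
  e - ∑ τ ∈ Finset.range t, r τ

/-- Laxity `ℓ_i(t) = max(d_i − t, 0) − e_i(t)/r̄_i`. -/
noncomputable def laxity (d : ℕ) (e rbar : ℝ) (r : ℕ → ℝ) (t : ℕ) : ℝ :=
  max ((d : ℝ) - (t : ℝ)) 0 - erem e r t / rbar

/-- The rates `r` (with thresholds `L`) are generated by the sLLF algorithm on the EVs in `V`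
with power limit `Q`: for active EVs, `r_i(t) = clamp(r̄_i (L(t) − ℓ_i(t) + 1), 0,
min(r̄_i, e_i(t)))`, rates vanish otherwise, and the total rate equals
`min(Q(t), Σ_{i∈V_t} min(r̄_i, e_i(t)))`. -/
def sLLFOn {n : ℕ} (V : Finset (Fin n)) (a d : Fin n → ℕ) (e rbar : Fin n → ℝ)
    (Q : ℕ → ℝ) (L : ℕ → ℝ) (r : Fin n → ℕ → ℝ) : Prop :=
  (∀ i ∈ V, ∀ t, a i ≤ t → t < d i →
    r i t = clamp (rbar i * (L t - laxity (d i) (e i) (rbar i) (r i) t + 1)) 0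
      (min (rbar i) (erem (e i) (r i) t))) ∧
  (∀ i ∈ V, ∀ t, ¬(a i ≤ t ∧ t < d i) → r i t = 0) ∧
  (∀ i ∉ V, ∀ t, r i t = 0) ∧
  (∀ t, ∑ i ∈ V.filter (fun i => a i ≤ t ∧ t < d i), r i t
      = min (Q t) (∑ i ∈ V.filter (fun i => a i ≤ t ∧ t < d i),
          min (rbar i) (erem (e i) (r i) t)))

/-!
Under sLLF an active EV's laxity moves by `r_i(t)/r̄_i - 1 ∈ [-1, 0]` and an inactive EV's laxity is
frozen, so laxities never increase. The clamp formula adds two facts: an active EV that charges at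
all ends the step with laxity at most the threshold `L(t)`, and an active EV that is not fully
charged by the end of the step ends it with laxity at least `min(L(t), ℓ(t))`. If `i` overtakes `j`,
then `i` must have been active (else `ℓ_i` is frozen and `ℓ_j` cannot increase), `j` must have been
active (else `ℓ_j` is frozen while `ℓ_i` cannot increase), `i` must have charged (else `ℓ_i` drops
by a full unit), and `j` must have finished (else `ℓ_j(t+1) ≥ min(L(t), ℓ_j(t)) ≥ ℓ_i(t+1)`).
-/

section Clamp

variable {x lo hi : ℝ}

lemma clamp_le : clamp x lo hi ≤ hi := min_le_right _ _

lemma le_clamp (h : lo ≤ hi) : lo ≤ clamp x lo hi := le_min (le_max_right _ _) h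

lemma clamp_le_of_lt (h : lo < clamp x lo hi) : clamp x lo hi ≤ x := by
  simp only [clamp, min_def, max_def] at *
  split_ifs at * <;> linarith

lemma le_clamp_of_lt (h : clamp x lo hi < hi) : x ≤ clamp x lo hi := by
  simp only [clamp, min_def, max_def] at *
  split_ifs at * <;> linarith

end Clamp

lemma erem_succ (e : ℝ) (r : ℕ → ℝ) (t : ℕ) : erem e r (t + 1) = erem e r t - r t := by
  simp only [erem, Finset.sum_range_succ]
  ring

lemma laxity_succ_of_lt {d t : ℕ} (h : t < d) (e rbar : ℝ) (r : ℕ → ℝ) :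
    laxity d e rbar r (t + 1) = laxity d e rbar r t - 1 + r t / rbar := by
  have hd : (t : ℝ) + 1 ≤ d := by exact_mod_cast h
  simp only [laxity, erem_succ, Nat.cast_succ]
  rw [max_eq_left (by linarith), max_eq_left (by linarith)]
  ring

lemma laxity_succ_of_le {d t : ℕ} (h : d ≤ t) (e rbar : ℝ) (r : ℕ → ℝ) :
    laxity d e rbar r (t + 1) = laxity d e rbar r t + r t / rbar := by
  have hd : (d : ℝ) ≤ t := by exact_mod_cast h
  simp only [laxity, erem_succ, Nat.cast_succ]
  rw [max_eq_right (by linarith), max_eq_right (by linarith)]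
  ring

namespace sLLFOn

variable {n : ℕ} {V : Finset (Fin n)} {a d : Fin n → ℕ} {e rbar : Fin n → ℝ} {Q L : ℕ → ℝ}
  {r : Fin n → ℕ → ℝ} {i : Fin n} {t : ℕ}

lemma rate_eq_zero (h : sLLFOn V a d e rbar Q L r) (hi : ¬(i ∈ V ∧ a i ≤ t ∧ t < d i)) :
    r i t = 0 := by
  by_cases hiV : i ∈ V
  · exact h.2.1 i hiV t fun ht => hi ⟨hiV, ht⟩
  · exact h.2.2.1 i hiV t

lemma rate_le_erem_of_active (h : sLLFOn V a d e rbar Q L r) (hi : i ∈ V) (ha : a i ≤ t)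
    (hd : t < d i) : r i t ≤ erem (e i) (r i) t := by
  rw [h.1 i hi t ha hd]
  exact clamp_le.trans (min_le_right _ _)

lemma erem_nonneg (h : sLLFOn V a d e rbar Q L r) (he : 0 ≤ e i) :
    ∀ t, 0 ≤ erem (e i) (r i) t
  | 0 => by simpa [erem] using he
  | t + 1 => by
    have ih := h.erem_nonneg he t
    rw [erem_succ]
    by_cases hact : i ∈ V ∧ a i ≤ t ∧ t < d i
    · linarith [h.rate_le_erem_of_active hact.1 hact.2.1 hact.2.2]
    · rw [h.rate_eq_zero hact]
      linarith

lemma rate_nonneg (h : sLLFOn V a d e rbar Q L r) (he : 0 ≤ e i) (hrbar : 0 ≤ rbar i) :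
    0 ≤ r i t := by
  by_cases hact : i ∈ V ∧ a i ≤ t ∧ t < d i
  · rw [h.1 i hact.1 t hact.2.1 hact.2.2]
    exact le_clamp (le_min hrbar (h.erem_nonneg he t))
  · exact (h.rate_eq_zero hact).ge

lemma rate_le_rbar (h : sLLFOn V a d e rbar Q L r) (hrbar : 0 ≤ rbar i) : r i t ≤ rbar i := by
  by_cases hact : i ∈ V ∧ a i ≤ t ∧ t < d i
  · rw [h.1 i hact.1 t hact.2.1 hact.2.2]
    exact clamp_le.trans (min_le_left _ _)
  · rw [h.rate_eq_zero hact]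
    exact hrbar

lemma laxity_succ_eq_of_le (h : sLLFOn V a d e rbar Q L r) (hd : d i ≤ t) :
    laxity (d i) (e i) (rbar i) (r i) (t + 1) = laxity (d i) (e i) (rbar i) (r i) t := by
  rw [laxity_succ_of_le hd, h.rate_eq_zero (by omega), zero_div, add_zero]

lemma laxity_succ_le (h : sLLFOn V a d e rbar Q L r) (hrbar : 0 < rbar i) :
    laxity (d i) (e i) (rbar i) (r i) (t + 1) ≤ laxity (d i) (e i) (rbar i) (r i) t := by
  rcases lt_or_ge t (d i) with hd | hd
  · have : r i t / rbar i ≤ 1 := (div_le_one hrbar).mpr (h.rate_le_rbar hrbar.le)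
    rw [laxity_succ_of_lt hd]
    linarith
  · exact (h.laxity_succ_eq_of_le hd).le

lemma laxity_succ_le_threshold (h : sLLFOn V a d e rbar Q L r) (hi : i ∈ V) (ha : a i ≤ t)
    (hd : t < d i) (hrbar : 0 < rbar i) (hpos : 0 < r i t) :
    laxity (d i) (e i) (rbar i) (r i) (t + 1) ≤ L t := by
  have hclamp := h.1 i hi t ha hd
  have hle : r i t ≤ rbar i * (L t - laxity (d i) (e i) (rbar i) (r i) t + 1) := by
    rw [hclamp] at hpos ⊢
    exact clamp_le_of_lt hpos
  have : r i t / rbar i ≤ L t - laxity (d i) (e i) (rbar i) (r i) t + 1 := by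
    rw [div_le_iff₀ hrbar]
    linarith
  rw [laxity_succ_of_lt hd]
  linarith

lemma min_threshold_laxity_le_laxity_succ (h : sLLFOn V a d e rbar Q L r) (hi : i ∈ V)
    (ha : a i ≤ t) (hd : t < d i) (hrbar : 0 < rbar i) (hrem : 0 < erem (e i) (r i) (t + 1)) :
    min (L t) (laxity (d i) (e i) (rbar i) (r i) t)
      ≤ laxity (d i) (e i) (rbar i) (r i) (t + 1) := by
  rw [erem_succ] at hrem
  rw [laxity_succ_of_lt hd]
  rcases (h.rate_le_rbar hrbar.le).lt_or_eq with hlt | heq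
  · -- the rate is capped neither by `r̄_i` nor by the remaining demand, so it is the raw value
    have hge : rbar i * (L t - laxity (d i) (e i) (rbar i) (r i) t + 1) ≤ r i t := by
      have hclamp := h.1 i hi t ha hd
      rw [hclamp] at hlt hrem ⊢
      exact le_clamp_of_lt (lt_min hlt (by linarith))
    have : L t - laxity (d i) (e i) (rbar i) (r i) t + 1 ≤ r i t / rbar i := by
      rw [le_div_iff₀ hrbar]
      linarith
    exact (min_le_left _ _).trans (by linarith)
  · rw [heq, div_self hrbar.ne']
    exact (min_le_right _ _).trans (by linarith)

end sLLFOn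

theorem stmt_6_general {n : ℕ} (a d : Fin n → ℕ) (e rbar : Fin n → ℝ) (P : ℕ → ℝ)
    (he : ∀ i, 0 < e i) (hrbar : ∀ i, 0 < rbar i)
    (L : ℕ → ℝ) (r : Fin n → ℕ → ℝ)
    (hrun : sLLFOn Finset.univ a d e rbar P L r)
    (i j : Fin n) (t : ℕ) (hai : a i ≤ t) (haj : a j ≤ t)
    (h1 : laxity (d i) (e i) (rbar i) (r i) t ≤ laxity (d j) (e j) (rbar j) (r j) t)
    (h2 : laxity (d j) (e j) (rbar j) (r j) (t + 1)
        < laxity (d i) (e i) (rbar i) (r i) (t + 1)) :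
    Xor' (d i ≤ t ∧ r i t = 0)
      (t < d i ∧ t < d j ∧ erem (e j) (r j) (t + 1) = 0 ∧ r i t ≠ 0) := by
  have hi_le := hrun.laxity_succ_le (t := t) (hrbar i)
  rcases le_or_gt (d i) t with hdi | hdi
  · exact Or.inl ⟨⟨hdi, hrun.rate_eq_zero (by omega)⟩, fun hb => hb.1.not_ge hdi⟩
  have hdj : t < d j := by
    by_contra! hdj
    linarith [hrun.laxity_succ_eq_of_le hdj]
  have hri : 0 < r i t := by
    by_contra! hri
    have : r i t / rbar i ≤ 0 := div_nonpos_of_nonpos_of_nonneg hri (hrbar i).le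
    have : 0 ≤ r j t / rbar j :=
      div_nonneg (hrun.rate_nonneg (he j).le (hrbar j).le) (hrbar j).le
    linarith [laxity_succ_of_lt hdi (e i) (rbar i) (r i),
      laxity_succ_of_lt hdj (e j) (rbar j) (r j)]
  have hej : erem (e j) (r j) (t + 1) = 0 := by
    by_contra hne
    have hrem := lt_of_le_of_ne (hrun.erem_nonneg (he j).le (t + 1)) (Ne.symm hne)
    have hi_thr := hrun.laxity_succ_le_threshold (Finset.mem_univ i) hai hdi (hrbar i) hri
    rcases min_le_iff.mp (hrun.min_threshold_laxity_le_laxity_succ (Finset.mem_univ j) haj hdj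
      (hrbar j) hrem) with hj | hj <;> linarith
  exact Or.inr ⟨⟨hdi, hdj, hej, hri.ne'⟩, fun ha => ha.1.not_gt hdi⟩

/-- Lemma 1, persistence: under sLLF, if `ℓ_i(t) ≤ ℓ_j(t)` and
`ℓ_i(t+1) > ℓ_j(t+1)` then exactly one of the following holds:
(a) `t ≥ d_i` and `r_i(t) = 0`; or (b) `t < d_i`, `t < d_j`, `e_j(t+1) = 0` and
`r_i(t) ≠ 0`. -/
theorem stmt_6 {n : ℕ} (T : ℕ) (a d : Fin n → ℕ) (e rbar : Fin n → ℝ) (P : ℕ → ℝ)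
    (had : ∀ i, a i < d i) (hdT : ∀ i, d i ≤ T)
    (he : ∀ i, 0 < e i) (hrbar : ∀ i, 0 < rbar i) (hP : ∀ t, 0 ≤ P t)
    (L : ℕ → ℝ) (r : Fin n → ℕ → ℝ)
    (hrun : sLLFOn Finset.univ a d e rbar P L r)
    (i j : Fin n) (t : ℕ) (hai : a i ≤ t) (haj : a j ≤ t)
    (h1 : laxity (d i) (e i) (rbar i) (r i) t ≤ laxity (d j) (e j) (rbar j) (r j) t)
    (h2 : laxity (d j) (e j) (rbar j) (r j) (t + 1)
        < laxity (d i) (e i) (rbar i) (r i) (t + 1)) :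
    Xor' (d i ≤ t ∧ r i t = 0)
      (t < d i ∧ t < d j ∧ erem (e j) (r j) (t + 1) = 0 ∧ r i t ≠ 0) :=
  stmt_6_general a d e rbar P he hrbar L r hrun i j t hai haj h1 h2
end

section
/- (Corollary 2, max-min fairness) Let r(t) be a maximizer of Σ_{i∈V_t} r̄_i·log(ℓ_i(t) − 1 + r_i(t)/r̄_i) over all feasible rate vectors, with resulting one-step-ahead laxities ℓ_i(t+1) = ℓ_i(t) − 1 + r_i(t)/r̄_i, and assume ℓ_i(t+1) > 0 for all i ∈ V_t. If a feasible rate vector r̂(t), with resulting laxities ℓ̂_i(t+1) = ℓ_i(t) − 1 + r̂_i(t)/r̄_i, satisfies ℓ̂_i(t+1) > ℓ_i(t+1) for some i ∈ V_t, then there exists j ∈ V_t with ℓ̂_j(t+1) ≤ ℓ_i(t+1) and ℓ̂_j(t+1) < ℓ_j(t+1). -/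
/-- Auxiliary: `log y ≥ 1 - x/y`-style transfer inequality for two coordinates. -/
lemma transfer_gain (ri rj a b ε : ℝ) (hri : 0 < ri) (hrj : 0 < rj)
    (ha : 0 < a) (hε : 0 < ε) (hab : a + ε / ri < b - ε / rj) :
    ri * Real.log a + rj * Real.log b
      < ri * Real.log (a + ε / ri) + rj * Real.log (b - ε / rj) := by
  set A := a + ε / ri with hA
  set B := b - ε / rj with hB
  have hεri : 0 < ε / ri := div_pos hε hri
  have hεrj : 0 < ε / rj := div_pos hε hrj
  have hAp : 0 < A := by positivity
  have hBp : 0 < B := lt_trans hAp hab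
  have hbp : 0 < b := by simp only [hB] at hBp; linarith
  -- log A - log a ≥ (A - a)/A
  have h1 : Real.log a - Real.log A ≤ a / A - 1 := by
    have := Real.log_le_sub_one_of_pos (x := a / A) (by positivity)
    rwa [Real.log_div (ne_of_gt ha) (ne_of_gt hAp)] at this
  -- log b - log B ≤ (b - B)/B
  have h2 : Real.log b - Real.log B ≤ b / B - 1 := by
    have := Real.log_le_sub_one_of_pos (x := b / B) (by positivity)
    rwa [Real.log_div (ne_of_gt hbp) (ne_of_gt hBp)] at this
  -- so gain ≥ ε/A - ε/B > 0
  have e1 : a / A - 1 = -(ε / ri) / A := by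
    rw [div_sub_one (ne_of_gt hAp), hA]; ring_nf
  have e2 : b / B - 1 = (ε / rj) / B := by
    rw [div_sub_one (ne_of_gt hBp), hB]; ring_nf
  rw [e1] at h1; rw [e2] at h2
  have key : ε / A - ε / B > 0 := by
    have : ε / B < ε / A := div_lt_div_of_pos_left hε hAp hab
    linarith
  have k1 : ri * (Real.log A - Real.log a) ≥ ε / A := by
    have := mul_le_mul_of_nonneg_left (neg_le_neg h1) (le_of_lt hri)
    have hh : ri * (-(-(ε / ri) / A)) = ε / A := by field_simp
    rw [hh] at this
    linarith [this]
  have k2 : rj * (Real.log b - Real.log B) ≤ ε / B := by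
    have := mul_le_mul_of_nonneg_left h2 (le_of_lt hrj)
    have hh : rj * ((ε / rj) / B) = ε / B := by field_simp
    rw [hh] at this
    linarith [this]
  nlinarith [k1, k2, key]

/-- Corollary 2, max-min fairness: if `r` maximizes
`Σ_i r̄_i log(ℓ_i(t) − 1 + r_i/r̄_i)` over feasible rate vectors with positive resulting
one-step-ahead laxities, and a feasible `r̂` gives `ℓ̂_i(t+1) > ℓ_i(t+1)` for some `i`,
then there is `j` with `ℓ̂_j(t+1) ≤ ℓ_i(t+1)` and `ℓ̂_j(t+1) < ℓ_j(t+1)`. -/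
theorem stmt_8 {n : ℕ} (rbar e ℓ : Fin n → ℝ) (P : ℝ)
    (hrbar : ∀ i, 0 < rbar i) (he : ∀ i, 0 ≤ e i) (hP : 0 ≤ P)
    (r : Fin n → ℝ)
    (hfeas : (∀ i, 0 ≤ r i ∧ r i ≤ min (rbar i) (e i)) ∧ ∑ i, r i ≤ P)
    (hmax : ∀ s : Fin n → ℝ,
      (∀ i, 0 ≤ s i ∧ s i ≤ min (rbar i) (e i)) → (∑ i, s i ≤ P) →
      ∑ i, rbar i * Real.log (ℓ i - 1 + s i / rbar i)
        ≤ ∑ i, rbar i * Real.log (ℓ i - 1 + r i / rbar i))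
    (hpos : ∀ i, 0 < ℓ i - 1 + r i / rbar i)
    (rhat : Fin n → ℝ)
    (hfeashat : (∀ i, 0 ≤ rhat i ∧ rhat i ≤ min (rbar i) (e i)) ∧ ∑ i, rhat i ≤ P)
    (i : Fin n)
    (hi : ℓ i - 1 + r i / rbar i < ℓ i - 1 + rhat i / rbar i) :
    ∃ j : Fin n,
      ℓ j - 1 + rhat j / rbar j ≤ ℓ i - 1 + r i / rbar i ∧
      ℓ j - 1 + rhat j / rbar j < ℓ j - 1 + r j / rbar j := by
  by_contra hcon
  push_neg at hcon
  -- from hi : r i < rhat i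
  have hri : r i < rhat i := by
    have h : r i / rbar i < rhat i / rbar i := by linarith
    have := mul_lt_mul_of_pos_right h (hrbar i)
    rwa [div_mul_cancel₀ _ (ne_of_gt (hrbar i)),
      div_mul_cancel₀ _ (ne_of_gt (hrbar i))] at this
  by_cases hB : ∀ k, r k ≤ rhat k
  · -- Case B: increase coordinate i to rhat i
    set s : Fin n → ℝ := Function.update r i (rhat i) with hs
    have hsk : ∀ k, k ≠ i → s k = r k := fun k hk => Function.update_of_ne hk _ _
    have hsi : s i = rhat i := Function.update_self _ _ _
    have hfeas_s : ∀ k, 0 ≤ s k ∧ s k ≤ min (rbar k) (e k) := by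
      intro k
      by_cases hk : k = i
      · subst hk; rw [hsi]; exact hfeashat.1 k
      · rw [hsk k hk]; exact hfeas.1 k
    have hsum_s : ∑ k, s k ≤ P := by
      refine le_trans (Finset.sum_le_sum ?_) hfeashat.2
      intro k _
      by_cases hk : k = i
      · subst hk; rw [hsi]
      · rw [hsk k hk]; exact hB k
    have hle := hmax s hfeas_s hsum_s
    have hlt : ∑ k, rbar k * Real.log (ℓ k - 1 + r k / rbar k)
        < ∑ k, rbar k * Real.log (ℓ k - 1 + s k / rbar k) := by
      refine Finset.sum_lt_sum ?_ ⟨i, Finset.mem_univ i, ?_⟩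
      · intro k _
        by_cases hk : k = i
        · rw [hk, hsi]
          exact le_of_lt (mul_lt_mul_of_pos_left
            (Real.log_lt_log (hpos i) hi) (hrbar i))
        · rw [hsk k hk]
      · rw [hsi]
        exact mul_lt_mul_of_pos_left (Real.log_lt_log (hpos i) hi) (hrbar i)
    linarith
  · -- Case A: some j with rhat j < r j; transfer ε from j to i
    push_neg at hB
    obtain ⟨j, hj⟩ := hB
    -- laxities
    set Li := ℓ i - 1 + r i / rbar i with hLi
    set Lj := ℓ j - 1 + r j / rbar j with hLj
    set Lhj := ℓ j - 1 + rhat j / rbar j with hLhj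
    have hjlt : Lhj < Lj := by
      have h : rhat j / rbar j < r j / rbar j := by
        have := mul_lt_mul_of_pos_right hj (inv_pos.mpr (hrbar j))
        rwa [← div_eq_mul_inv, ← div_eq_mul_inv] at this
      simp only [hLhj, hLj]; linarith
    have hLiLhj : Li < Lhj := by
      by_contra hle
      push_neg at hle
      exact absurd hjlt (not_lt.mpr (hcon j hle))
    have hij : j ≠ i := by
      intro hji; subst hji
      simp only [hLhj, hLj, hLi] at hjlt
      linarith
    have hij' : i ≠ j := Ne.symm hij
    have hLij : Li < Lj := lt_trans hLiLhj hjlt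
    -- choose ε
    set ε : ℝ := min (min (rhat i - r i) (r j - rhat j))
        ((Lj - Li) / (1 / rbar i + 1 / rbar j) / 2) with hε
    have hden : 0 < 1 / rbar i + 1 / rbar j := by
      have h1 := hrbar i; have h2 := hrbar j; positivity
    have hεpos : 0 < ε := by
      apply lt_min
      · exact lt_min (by linarith) (by linarith)
      · exact div_pos (div_pos (by linarith) hden) (by norm_num)
    have hε1 : ε ≤ rhat i - r i := le_trans (min_le_left _ _) (min_le_left _ _)
    have hε2 : ε ≤ r j - rhat j := le_trans (min_le_left _ _) (min_le_right _ _)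
    have hε3 : ε ≤ (Lj - Li) / (1 / rbar i + 1 / rbar j) / 2 := min_le_right _ _
    have hgap : Li + ε / rbar i < Lj - ε / rbar j := by
      have h1 : ε * (1 / rbar i + 1 / rbar j) < Lj - Li := by
        have hhalf : (Lj - Li) / (1 / rbar i + 1 / rbar j) / 2
            < (Lj - Li) / (1 / rbar i + 1 / rbar j) := by
          have : 0 < (Lj - Li) / (1 / rbar i + 1 / rbar j) :=
            div_pos (by linarith) hden
          linarith
        have := lt_of_le_of_lt hε3 hhalf
        calc ε * (1 / rbar i + 1 / rbar j)
            < (Lj - Li) / (1 / rbar i + 1 / rbar j) * (1 / rbar i + 1 / rbar j) :=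
              mul_lt_mul_of_pos_right this hden
          _ = Lj - Li := by field_simp
      have : ε / rbar i + ε / rbar j = ε * (1 / rbar i + 1 / rbar j) := by ring
      linarith
    -- the perturbed vector
    set s : Fin n → ℝ := fun k =>
      r k + (if k = i then ε else 0) - (if k = j then ε else 0) with hs
    have hsi : s i = r i + ε := by simp [hs, hij']
    have hsj : s j = r j - ε := by simp [hs, hij]
    have hsk : ∀ k, k ≠ i → k ≠ j → s k = r k := by
      intro k h1 h2; simp [hs, h1, h2]
    have hfeas_s : ∀ k, 0 ≤ s k ∧ s k ≤ min (rbar k) (e k) := by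
      intro k
      by_cases h1 : k = i
      · subst h1; rw [hsi]
        constructor
        · linarith [(hfeas.1 k).1]
        · have : r k + ε ≤ rhat k := by linarith
          exact le_trans this (hfeashat.1 k).2
      · by_cases h2 : k = j
        · subst h2; rw [hsj]
          constructor
          · linarith [(hfeashat.1 k).1]
          · linarith [(hfeas.1 k).2]
        · rw [hsk k h1 h2]; exact hfeas.1 k
    have hsum_s : ∑ k, s k ≤ P := by
      have : ∑ k, s k = ∑ k, r k := by
        simp only [hs]
        rw [Finset.sum_sub_distrib, Finset.sum_add_distrib]
        simp [Finset.sum_ite_eq', Finset.mem_univ]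
      rw [this]; exact hfeas.2
    have hle := hmax s hfeas_s hsum_s
    -- strict improvement
    have hposLi : 0 < Li := hpos i
    have hAi : ℓ i - 1 + s i / rbar i = Li + ε / rbar i := by
      rw [hsi, hLi, add_div]; ring
    have hAj : ℓ j - 1 + s j / rbar j = Lj - ε / rbar j := by
      rw [hsj, hLj, sub_div]; ring
    have hgain := transfer_gain (rbar i) (rbar j) Li Lj ε (hrbar i) (hrbar j)
      hposLi hεpos hgap
    have hlt : ∑ k, rbar k * Real.log (ℓ k - 1 + r k / rbar k)
        < ∑ k, rbar k * Real.log (ℓ k - 1 + s k / rbar k) := by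
      have hsplit : ∀ (f : Fin n → ℝ),
          ∑ k, f k = f i + f j + ∑ k ∈ Finset.univ \ {i, j}, f k := by
        intro f
        rw [← Finset.sum_sdiff (Finset.subset_univ {i, j}),
          Finset.sum_pair (Ne.symm hij)]
        ring
      rw [hsplit (fun k => rbar k * Real.log (ℓ k - 1 + r k / rbar k)),
        hsplit (fun k => rbar k * Real.log (ℓ k - 1 + s k / rbar k))]
      have heq : ∑ k ∈ Finset.univ \ {i, j},
          rbar k * Real.log (ℓ k - 1 + s k / rbar k)
          = ∑ k ∈ Finset.univ \ {i, j},
          rbar k * Real.log (ℓ k - 1 + r k / rbar k) := by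
        apply Finset.sum_congr rfl
        intro k hk
        simp only [Finset.mem_sdiff, Finset.mem_insert, Finset.mem_singleton] at hk
        rw [hsk k (fun h => hk.2 (Or.inl h)) (fun h => hk.2 (Or.inr h))]
      rw [heq, hAi, hAj]
      simp only [hLi, hLj] at hgain ⊢
      linarith
    linarith
end

section
/- (Lemma 2, laxity-order persistence) Suppose the sLLF algorithm run on instance I produces a negative laxity at some time, and let t_- be the earliest time at which some EV has negative laxity. Define F = {i ∈ V : a_i ≤ t_- and ℓ_i(t_-) < 0} and S₂ = {i ∈ V : a_i ≤ t_-, ℓ_i(t_-) ≥ 0, and d_i > t_-}, where all laxities are those produced by the sLLF run. Then for every i ∈ S₂ and every j ∈ F, ℓ_i(t) > ℓ_j(t) for all times t with max(a_i, a_j) ≤ t ≤ t_-. -/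
/-!
While both EVs are present, sLLF moves every laxity by the same monotone map
`ℓ ↦ ℓ - 1 + clamp (L t - ℓ + 1) 0 1`, except that an EV may receive less when its remaining
demand caps its rate; that lowers its next laxity, and for an EV that stays unsatisfied the cap
is never active. The EV `j ∈ F` still has demand left at `t_-`, so it has not yet departed
(otherwise its laxity at departure would already have been negative) and was never capped.
Hence `ℓ_i(t) ≤ ℓ_j(t)` at some `t < t_-` would propagate to `ℓ_i(t_-) ≤ ℓ_j(t_-) < 0`,
contradicting `i ∈ S₂`.
-/

lemma clamp_nonneg (x : ℝ) {hi : ℝ} (h : 0 ≤ hi) : 0 ≤ clamp x 0 hi :=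
  le_min (le_max_right _ _) h

lemma clamp_le_right (x lo hi : ℝ) : clamp x lo hi ≤ hi :=
  min_le_right _ _

lemma clamp_mul_left (x E : ℝ) {c : ℝ} (hc : 0 < c) :
    clamp (c * x) 0 (min c E) = c * clamp x 0 (min 1 (E / c)) := by
  unfold clamp
  rw [mul_min_of_nonneg _ _ hc.le, mul_max_of_nonneg _ _ hc.le, mul_zero,
    mul_min_of_nonneg _ _ hc.le, mul_one, mul_div_cancel₀ _ hc.ne']

lemma add_clamp_sub (ℓ M lo hi : ℝ) :
    ℓ + clamp (M - ℓ) lo hi = min (max M (ℓ + lo)) (ℓ + hi) := by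
  unfold clamp
  rw [add_min, add_max, add_sub_cancel]

lemma monotone_add_clamp_sub (M lo hi : ℝ) : Monotone fun ℓ ↦ ℓ + clamp (M - ℓ) lo hi := by
  intro ℓ ℓ' h
  simp only [add_clamp_sub]
  gcongr

lemma clamp_eq_clamp_one_of_lt {x B : ℝ} (h : clamp x 0 (min 1 B) < B) :
    clamp x 0 (min 1 B) = clamp x 0 1 := by
  unfold clamp at *
  rcases le_total 1 B with hB | hB
  · rw [min_eq_left hB]
  · rw [min_eq_right hB] at *
    have hx : max x 0 < B := (min_lt_iff.mp h).resolve_right (lt_irrefl B)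
    rw [min_eq_left hx.le, min_eq_left (hx.le.trans hB)]

lemma antitone_erem (e : ℝ) {r : ℕ → ℝ} (hr : ∀ τ, 0 ≤ r τ) : Antitone (erem e r) :=
  antitone_nat_of_succ_le fun t ↦ by rw [erem_succ]; linarith [hr t]

lemma laxity_succ {d t : ℕ} (e rbar : ℝ) (r : ℕ → ℝ) (ht : t < d) :
    laxity d e rbar r (t + 1) = laxity d e rbar r t - 1 + r t / rbar := by
  have hdt : ((t : ℝ) + 1) ≤ d := by exact_mod_cast ht
  rw [laxity, laxity, erem_succ, max_eq_left (by push_cast; linarith), max_eq_left (by linarith)]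
  push_cast
  ring

lemma erem_pos_of_laxity_neg {d t : ℕ} {e rbar : ℝ} {r : ℕ → ℝ} (hrbar : 0 < rbar)
    (h : laxity d e rbar r t < 0) : 0 < erem e r t := by
  rw [laxity] at h
  have : 0 < erem e r t / rbar := by linarith [le_max_right ((d : ℝ) - t) 0]
  exact (div_pos_iff_of_pos_right hrbar).mp this

lemma laxity_departure_nonneg_iff {d : ℕ} {e rbar : ℝ} {r : ℕ → ℝ} (hrbar : 0 < rbar) :
    0 ≤ laxity d e rbar r d ↔ erem e r d ≤ 0 := by
  rw [laxity, sub_self, max_self, zero_sub, neg_nonneg, div_le_iff₀ hrbar, zero_mul]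

/-- The sLLF rule as seen by a single EV with arrival `a`, departure `d` and thresholds `L`. -/
structure IsSLLFRate (a d : ℕ) (e rbar : ℝ) (L r : ℕ → ℝ) : Prop where
  active : ∀ t, a ≤ t → t < d →
    r t = clamp (rbar * (L t - laxity d e rbar r t + 1)) 0 (min rbar (erem e r t))
  idle : ∀ t, ¬(a ≤ t ∧ t < d) → r t = 0

lemma sLLFOn.isSLLFRate {n : ℕ} {V : Finset (Fin n)} {a d : Fin n → ℕ} {e rbar : Fin n → ℝ}
    {Q L : ℕ → ℝ} {r : Fin n → ℕ → ℝ} (h : sLLFOn V a d e rbar Q L r) {i : Fin n} (hi : i ∈ V) :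
    IsSLLFRate (a i) (d i) (e i) (rbar i) L (r i) :=
  ⟨h.1 i hi, h.2.1 i hi⟩

namespace IsSLLFRate

variable {a d : ℕ} {e rbar : ℝ} {L r : ℕ → ℝ}

lemma rate_mem_Icc (h : IsSLLFRate a d e rbar L r) (hrbar : 0 < rbar) {t : ℕ}
    (ht : 0 ≤ erem e r t) : r t ∈ Set.Icc 0 (erem e r t) := by
  by_cases hact : a ≤ t ∧ t < d
  · rw [h.active t hact.1 hact.2]
    exact ⟨clamp_nonneg _ (le_min hrbar.le ht), (clamp_le_right _ _ _).trans (min_le_right _ _)⟩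
  · rw [h.idle t hact]
    exact ⟨le_rfl, ht⟩

lemma erem_nonneg (h : IsSLLFRate a d e rbar L r) (he : 0 ≤ e) (hrbar : 0 < rbar) (t : ℕ) :
    0 ≤ erem e r t := by
  induction t with
  | zero => simpa [erem] using he
  | succ t ih =>
    rw [erem_succ]
    linarith [(h.rate_mem_Icc hrbar ih).2]

lemma rate_nonneg (h : IsSLLFRate a d e rbar L r) (he : 0 ≤ e) (hrbar : 0 < rbar) (t : ℕ) :
    0 ≤ r t :=
  (h.rate_mem_Icc hrbar (h.erem_nonneg he hrbar t)).1

lemma laxity_succ_eq (h : IsSLLFRate a d e rbar L r) (hrbar : 0 < rbar) {t : ℕ} (hat : a ≤ t)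
    (htd : t < d) :
    laxity d e rbar r (t + 1) = laxity d e rbar r t - 1 +
      clamp (L t - laxity d e rbar r t + 1) 0 (min 1 (erem e r t / rbar)) := by
  rw [laxity_succ e rbar r htd, h.active t hat htd, clamp_mul_left _ _ hrbar,
    mul_div_cancel_left₀ _ hrbar.ne']

lemma laxity_succ_le (h : IsSLLFRate a d e rbar L r) (hrbar : 0 < rbar) {t : ℕ} (hat : a ≤ t)
    (htd : t < d) :
    laxity d e rbar r (t + 1) ≤
      laxity d e rbar r t - 1 + clamp (L t - laxity d e rbar r t + 1) 0 1 := by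
  rw [h.laxity_succ_eq hrbar hat htd]
  exact (add_le_add_iff_left _).mpr (min_le_min_left _ (min_le_left 1 _))

lemma laxity_succ_eq_of_erem_pos (h : IsSLLFRate a d e rbar L r) (hrbar : 0 < rbar) {t : ℕ}
    (hat : a ≤ t) (htd : t < d) (hpos : 0 < erem e r (t + 1)) :
    laxity d e rbar r (t + 1) =
      laxity d e rbar r t - 1 + clamp (L t - laxity d e rbar r t + 1) 0 1 := by
  rw [h.laxity_succ_eq hrbar hat htd, clamp_eq_clamp_one_of_lt]
  rw [erem_succ, h.active t hat htd, clamp_mul_left _ _ hrbar] at hpos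
  rw [lt_div_iff₀ hrbar]
  linarith

end IsSLLFRate

lemma laxity_succ_le_of_le {a d a' d' : ℕ} {e rbar e' rbar' : ℝ} {L r r' : ℕ → ℝ} {t : ℕ}
    (h : IsSLLFRate a d e rbar L r) (h' : IsSLLFRate a' d' e' rbar' L r')
    (hrbar : 0 < rbar) (hrbar' : 0 < rbar') (hat : a ≤ t) (htd : t < d) (hat' : a' ≤ t)
    (htd' : t < d') (hpos' : 0 < erem e' r' (t + 1))
    (hle : laxity d e rbar r t ≤ laxity d' e' rbar' r' t) :
    laxity d e rbar r (t + 1) ≤ laxity d' e' rbar' r' (t + 1) := by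
  have hmono := monotone_add_clamp_sub (L t + 1) 0 1 hle
  simp only [← sub_add_eq_add_sub] at hmono
  rw [h'.laxity_succ_eq_of_erem_pos hrbar' hat' htd' hpos']
  linarith [h.laxity_succ_le hrbar hat htd]

theorem stmt_9_general {n : ℕ} (a d : Fin n → ℕ) (e rbar : Fin n → ℝ) (P : ℕ → ℝ)
    (had : ∀ i, a i < d i)
    (he : ∀ i, 0 < e i) (hrbar : ∀ i, 0 < rbar i)
    (L : ℕ → ℝ) (r : Fin n → ℕ → ℝ)
    (hrun : sLLFOn Finset.univ a d e rbar P L r)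
    (tm : ℕ)
    (hearliest : ∀ t < tm, ∀ i, a i ≤ t → 0 ≤ laxity (d i) (e i) (rbar i) (r i) t) :
    ∀ i j : Fin n,
      (a i ≤ tm ∧ 0 ≤ laxity (d i) (e i) (rbar i) (r i) tm ∧ tm < d i) →
      (a j ≤ tm ∧ laxity (d j) (e j) (rbar j) (r j) tm < 0) →
      ∀ t : ℕ, max (a i) (a j) ≤ t → t ≤ tm →
        laxity (d j) (e j) (rbar j) (r j) t < laxity (d i) (e i) (rbar i) (r i) t := by
  rintro i j ⟨-, hℓi, hdi⟩ ⟨-, hℓj⟩ t hmax htm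
  have hri := hrun.isSLLFRate (Finset.mem_univ i)
  have hrj := hrun.isSLLFRate (Finset.mem_univ j)
  have hantij := antitone_erem (e j) (hrj.rate_nonneg (he j).le (hrbar j))
  have hposj := erem_pos_of_laxity_neg (hrbar j) hℓj
  have hdj : tm ≤ d j := by
    by_contra! hlt
    have := (laxity_departure_nonneg_iff (hrbar j)).mp (hearliest _ hlt j (had j).le)
    linarith [hantij hlt.le]
  refine Nat.decreasingInduction' (fun k hk htk ih ↦ ?_) htm (by linarith)
  have hmaxk : max (a i) (a j) ≤ k := hmax.trans htk
  by_contra! hle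
  have := laxity_succ_le_of_le hri hrj (hrbar i) (hrbar j) (le_of_max_le_left hmaxk)
    (hk.trans hdi) (le_of_max_le_right hmaxk) (hk.trans_le hdj)
    (hposj.trans_le (hantij hk)) hle
  linarith

/-- Lemma 2, laxity-order persistence: if the sLLF run first produces a
negative laxity at time `t_-`, then every EV of `S₂` (nonnegative laxity at `t_-`, departing
after `t_-`) has laxity strictly greater than that of every EV of `F` (negative laxity at
`t_-`) at all times `t` with `max(a_i, a_j) ≤ t ≤ t_-`. -/
theorem stmt_9 {n : ℕ} (T : ℕ) (a d : Fin n → ℕ) (e rbar : Fin n → ℝ) (P : ℕ → ℝ)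
    (had : ∀ i, a i < d i) (hdT : ∀ i, d i ≤ T)
    (he : ∀ i, 0 < e i) (hrbar : ∀ i, 0 < rbar i) (hP : ∀ t, 0 ≤ P t)
    (L : ℕ → ℝ) (r : Fin n → ℕ → ℝ)
    (hrun : sLLFOn Finset.univ a d e rbar P L r)
    (tm : ℕ)
    (hneg : ∃ i, a i ≤ tm ∧ laxity (d i) (e i) (rbar i) (r i) tm < 0)
    (hearliest : ∀ t < tm, ∀ i, a i ≤ t → 0 ≤ laxity (d i) (e i) (rbar i) (r i) t) :
    ∀ i j : Fin n,
      (a i ≤ tm ∧ 0 ≤ laxity (d i) (e i) (rbar i) (r i) tm ∧ tm < d i) →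
      (a j ≤ tm ∧ laxity (d j) (e j) (rbar j) (r j) tm < 0) →
      ∀ t : ℕ, max (a i) (a j) ≤ t → t ≤ tm →
        laxity (d j) (e j) (rbar j) (r j) t < laxity (d i) (e i) (rbar i) (r i) t :=
  stmt_9_general a d e rbar P had he hrbar L r hrun tm hearliest
end

section
/- (Online–offline energy gap) Let I be an offline feasible instance, and suppose the sLLF algorithm run on I with an augmented power limit Q(t) ≥ P(t) (peak rates unchanged) produces a negative laxity at some time; let t_- be the earliest such time and define F = {i ∈ V : a_i ≤ t_-, ℓ_i(t_-) < 0}, S₁ = {i ∈ V : a_i ≤ t_-, ℓ_i(t_-) ≥ 0, d_i ≤ t_-}, and Ṽ = F ∪ S₁, laxities being those of the online run. Then for every charging profile r* satisfying the rate, power (with limit P(t)), and demand constraints of I, the total energy delivered to the EVs in Ṽ during times 0,…,t_- − 1 by the online run is strictly less than that delivered by r*: Σ_{i∈Ṽ} Σ_{τ=0}^{t_- − 1} r_i(τ) < Σ_{i∈Ṽ} Σ_{τ=0}^{t_- − 1} r*_i(τ). -/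
/-- The rate constraint. -/
def RateOK {n : ℕ} (a d : Fin n → ℕ) (rbar : Fin n → ℝ) (r : Fin n → ℕ → ℝ) : Prop :=
  (∀ i t, a i ≤ t → t < d i → 0 ≤ r i t ∧ r i t ≤ rbar i) ∧
  (∀ i t, ¬(a i ≤ t ∧ t < d i) → r i t = 0)

/-- The power constraint with power limit `P`. -/
def PowerOK {n : ℕ} (T : ℕ) (P : ℕ → ℝ) (r : Fin n → ℕ → ℝ) : Prop :=
  ∀ t, t ≤ T → ∑ i, r i t ≤ P t

/-- The demand constraint. -/
def DemandOK {n : ℕ} (T : ℕ) (e : Fin n → ℝ) (r : Fin n → ℕ → ℝ) : Prop :=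
  ∀ i, ∑ t ∈ Finset.range (T + 1), r i t = e i

/-- If the deadline has passed, any feasible profile has delivered the full demand. -/
lemma sum_rstar_eq {n : ℕ} (T : ℕ) (a d : Fin n → ℕ) (e rbar : Fin n → ℝ)
    (rstar : Fin n → ℕ → ℝ) (hR : RateOK a d rbar rstar) (hD : DemandOK T e rstar)
    (hdT : ∀ i, d i ≤ T) (i : Fin n) (tm : ℕ) (h : d i ≤ tm) :
    ∑ τ ∈ Finset.range tm, rstar i τ = e i := by
  have h0 : ∀ τ, d i ≤ τ → rstar i τ = 0 := fun τ hτ =>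
    hR.2 i τ (by push_neg; intro _; omega)
  set M := max tm (T + 1) with hM
  have e1 : ∑ τ ∈ Finset.range tm, rstar i τ = ∑ τ ∈ Finset.range M, rstar i τ :=
    Finset.sum_subset (Finset.range_subset_range.2 (le_max_left _ _)) (by
      intro x hx hnx
      simp only [Finset.mem_range, not_lt] at hx hnx
      exact h0 x (le_trans h hnx))
  have e2 : ∑ τ ∈ Finset.range (T + 1), rstar i τ = ∑ τ ∈ Finset.range M, rstar i τ :=
    Finset.sum_subset (Finset.range_subset_range.2 (le_max_right _ _)) (by
      intro x hx hnx
      simp only [Finset.mem_range, not_lt] at hx hnx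
      exact h0 x (by have := hdT i; omega))
  rw [e1, ← e2, hD i]

/-- Lower bound on the energy delivered by a feasible profile up to time `tm`. -/
lemma sum_rstar_lb {n : ℕ} (T : ℕ) (a d : Fin n → ℕ) (e rbar : Fin n → ℝ)
    (rstar : Fin n → ℕ → ℝ) (hR : RateOK a d rbar rstar) (hD : DemandOK T e rstar)
    (hdT : ∀ i, d i ≤ T) (hrbar : ∀ i, 0 < rbar i) (i : Fin n) (tm : ℕ) :
    e i - rbar i * max ((d i : ℝ) - (tm : ℝ)) 0 ≤ ∑ τ ∈ Finset.range tm, rstar i τ := by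
  by_cases h : d i ≤ tm
  · rw [sum_rstar_eq T a d e rbar rstar hR hD hdT i tm h]
    have hmax : max ((d i : ℝ) - (tm : ℝ)) 0 = 0 := by
      apply max_eq_right
      have : (d i : ℝ) ≤ (tm : ℝ) := by exact_mod_cast h
      linarith
    rw [hmax, mul_zero]; linarith
  · push_neg at h
    have htT : tm < T + 1 := by have := hdT i; omega
    -- split the full sum
    have hsplit : ∑ τ ∈ Finset.range (T + 1), rstar i τ
        = ∑ τ ∈ Finset.range tm, rstar i τ + ∑ τ ∈ Finset.Ico tm (T + 1), rstar i τ := by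
      simp only [Finset.range_eq_Ico]
      exact (Finset.sum_Ico_consecutive _ (Nat.zero_le tm) (le_of_lt htT)).symm
    have hsplit2 : ∑ τ ∈ Finset.Ico tm (T + 1), rstar i τ
        = ∑ τ ∈ Finset.Ico tm (d i), rstar i τ + ∑ τ ∈ Finset.Ico (d i) (T + 1), rstar i τ := by
      rw [← Finset.sum_Ico_consecutive _ (le_of_lt h) (by have := hdT i; omega)]
    have hz : ∑ τ ∈ Finset.Ico (d i) (T + 1), rstar i τ = 0 := by
      apply Finset.sum_eq_zero
      intro x hx
      rw [Finset.mem_Ico] at hx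
      exact hR.2 i x (by push_neg; intro _; omega)
    have hb : ∑ τ ∈ Finset.Ico tm (d i), rstar i τ ≤ (d i - tm : ℕ) * rbar i := by
      have := Finset.sum_le_card_nsmul (Finset.Ico tm (d i)) (fun τ => rstar i τ) (rbar i)
        (by
          intro x hx
          show rstar i x ≤ rbar i
          by_cases hax : a i ≤ x ∧ x < d i
          · exact (hR.1 i x hax.1 hax.2).2
          · rw [hR.2 i x hax]; exact le_of_lt (hrbar i))
      rwa [Nat.card_Ico, nsmul_eq_mul] at this
    have hcast : ((d i - tm : ℕ) : ℝ) = (d i : ℝ) - (tm : ℝ) := by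
      rw [Nat.cast_sub (le_of_lt h)]
    have hmax : max ((d i : ℝ) - (tm : ℝ)) 0 = (d i : ℝ) - (tm : ℝ) := by
      apply max_eq_left
      have : (tm : ℝ) ≤ (d i : ℝ) := by exact_mod_cast le_of_lt h
      linarith
    have := hD i
    rw [hsplit, hsplit2, hz] at this
    rw [hcast] at hb
    rw [hmax]
    linarith

/-- Online–offline energy gap: for an offline feasible instance on which the
sLLF run with augmented power limit `Q(t) ≥ P(t)` first produces a negative laxity at `t_-`,
the online run delivers strictly less energy to the EVs of `Ṽ = F ∪ S₁` during times
`0, …, t_- − 1` than any feasible offline profile `r*`. -/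
theorem stmt_11 {n : ℕ} (T : ℕ) (a d : Fin n → ℕ) (e rbar : Fin n → ℝ) (P Q : ℕ → ℝ)
    (had : ∀ i, a i < d i) (hdT : ∀ i, d i ≤ T)
    (he : ∀ i, 0 < e i) (hrbar : ∀ i, 0 < rbar i) (hP : ∀ t, 0 ≤ P t)
    (hPQ : ∀ t, P t ≤ Q t)
    (hfeas : ∃ rs : Fin n → ℕ → ℝ, RateOK a d rbar rs ∧ PowerOK T P rs ∧ DemandOK T e rs)
    (L : ℕ → ℝ) (r : Fin n → ℕ → ℝ)
    (hrun : sLLFOn Finset.univ a d e rbar Q L r)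
    (tm : ℕ)
    (hneg : ∃ i, a i ≤ tm ∧ laxity (d i) (e i) (rbar i) (r i) tm < 0)
    (hearliest : ∀ t < tm, ∀ i, a i ≤ t → 0 ≤ laxity (d i) (e i) (rbar i) (r i) t)
    (Vtil : Finset (Fin n))
    (hVtil : Vtil = Finset.univ.filter (fun i => a i ≤ tm ∧
      (laxity (d i) (e i) (rbar i) (r i) tm < 0 ∨
        (0 ≤ laxity (d i) (e i) (rbar i) (r i) tm ∧ d i ≤ tm)))) :
    ∀ rstar : Fin n → ℕ → ℝ,
      RateOK a d rbar rstar → PowerOK T P rstar → DemandOK T e rstar →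
      ∑ i ∈ Vtil, ∑ τ ∈ Finset.range tm, r i τ
        < ∑ i ∈ Vtil, ∑ τ ∈ Finset.range tm, rstar i τ := by
  intro rstar hRs hPs hDs
  -- remaining demand of the online run is always nonnegative
  have hE : ∀ i t, 0 ≤ erem (e i) (r i) t := by
    intro i t
    induction t with
    | zero => simp [erem]; exact le_of_lt (he i)
    | succ t ih =>
      have hstep : erem (e i) (r i) (t + 1) = erem (e i) (r i) t - r i t := by
        simp [erem, Finset.sum_range_succ]; ring
      have hr_le : r i t ≤ erem (e i) (r i) t := by
        by_cases hact : a i ≤ t ∧ t < d i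
        · rw [hrun.1 i (Finset.mem_univ i) t hact.1 hact.2]
          unfold clamp
          exact le_trans (min_le_right _ _) (min_le_right _ _)
        · rw [hrun.2.1 i (Finset.mem_univ i) t hact]; exact ih
      rw [hstep]; linarith
  -- per-EV comparison
  have key : ∀ i ∈ Vtil, ∑ τ ∈ Finset.range tm, r i τ ≤ ∑ τ ∈ Finset.range tm, rstar i τ := by
    intro i hi
    rw [hVtil, Finset.mem_filter] at hi
    obtain ⟨-, -, hcase⟩ := hi
    rcases hcase with hF | ⟨hlax, hdle⟩
    · -- negative laxity: strict inequality, a fortiori ≤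
      have hlax : max ((d i : ℝ) - (tm : ℝ)) 0 - erem (e i) (r i) tm / rbar i < 0 := hF
      have h1 : rbar i * max ((d i : ℝ) - (tm : ℝ)) 0 < erem (e i) (r i) tm := by
        have h2 : max ((d i : ℝ) - (tm : ℝ)) 0 < erem (e i) (r i) tm / rbar i := by linarith
        have := (lt_div_iff₀ (hrbar i)).1 h2
        linarith [this]
      have h3 := sum_rstar_lb T a d e rbar rstar hRs hDs hdT hrbar i tm
      have h4 : erem (e i) (r i) tm = e i - ∑ τ ∈ Finset.range tm, r i τ := rfl
      linarith
    · -- S₁ case: equality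
      have hmax : max ((d i : ℝ) - (tm : ℝ)) 0 = 0 := by
        apply max_eq_right
        have : (d i : ℝ) ≤ (tm : ℝ) := by exact_mod_cast hdle
        linarith
      have hlax' : (0 : ℝ) ≤ max ((d i : ℝ) - (tm : ℝ)) 0 - erem (e i) (r i) tm / rbar i := hlax
      rw [hmax] at hlax'
      have h5 : erem (e i) (r i) tm ≤ 0 := by
        have h6 : erem (e i) (r i) tm / rbar i ≤ 0 := by linarith
        by_contra h7
        push_neg at h7
        have := div_pos h7 (hrbar i)
        linarith
      have h8 : erem (e i) (r i) tm = 0 := le_antisymm h5 (hE i tm)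
      have h9 : ∑ τ ∈ Finset.range tm, r i τ = e i := by
        have : e i - ∑ τ ∈ Finset.range tm, r i τ = 0 := h8
        linarith
      rw [h9, sum_rstar_eq T a d e rbar rstar hRs hDs hdT i tm hdle]
  -- strict inequality at the witness of negative laxity
  obtain ⟨i0, ha0, hl0⟩ := hneg
  have hi0 : i0 ∈ Vtil := by
    rw [hVtil, Finset.mem_filter]
    exact ⟨Finset.mem_univ i0, ha0, Or.inl hl0⟩
  have hstrict : ∑ τ ∈ Finset.range tm, r i0 τ < ∑ τ ∈ Finset.range tm, rstar i0 τ := by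
    have hlax : max ((d i0 : ℝ) - (tm : ℝ)) 0 - erem (e i0) (r i0) tm / rbar i0 < 0 := hl0
    have h1 : rbar i0 * max ((d i0 : ℝ) - (tm : ℝ)) 0 < erem (e i0) (r i0) tm := by
      have h2 : max ((d i0 : ℝ) - (tm : ℝ)) 0 < erem (e i0) (r i0) tm / rbar i0 := by linarith
      have := (lt_div_iff₀ (hrbar i0)).1 h2
      linarith [this]
    have h3 := sum_rstar_lb T a d e rbar rstar hRs hDs hdT hrbar i0 tm
    have h4 : erem (e i0) (r i0) tm = e i0 - ∑ τ ∈ Finset.range tm, r i0 τ := rfl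
    linarith
  exact Finset.sum_lt_sum key ⟨i0, hi0, hstrict⟩
end

section
/- (Arithmetic core of Theorem 2) Let u, o ≥ 0 be real numbers with T = u + o > 0, let r̄, P_min, P_max be reals with 0 < r̄ ≤ P_min ≤ P_max, and let ε ≥ 0. If (1+ε)·u·r̄ < T·r̄ and (1+ε)·(u·r̄ + o·P_min) < T·P_max, then (1+ε)·P_min·T < T·(P_max + P_min − r̄), and hence ε < P_max/P_min − r̄/P_min. -/
/-- Arithmetic core of Theorem 2: if `u, o ≥ 0` with `T = u + o > 0`,
`0 < r̄ ≤ P_min ≤ P_max`, `ε ≥ 0`, `(1+ε)·u·r̄ < T·r̄` and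
`(1+ε)·(u·r̄ + o·P_min) < T·P_max`, then `(1+ε)·P_min·T < T·(P_max + P_min − r̄)`,
and hence `ε < P_max/P_min − r̄/P_min`. -/
theorem stmt_17 (u o rb Pmin Pmax ε : ℝ)
    (hu : 0 ≤ u) (ho : 0 ≤ o) (hT : 0 < u + o)
    (hrb : 0 < rb) (hrP : rb ≤ Pmin) (hPP : Pmin ≤ Pmax)
    (hε : 0 ≤ ε)
    (h1 : (1 + ε) * u * rb < (u + o) * rb)
    (h2 : (1 + ε) * (u * rb + o * Pmin) < (u + o) * Pmax) :
    (1 + ε) * Pmin * (u + o) < (u + o) * (Pmax + Pmin - rb) ∧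
    ε < Pmax / Pmin - rb / Pmin := by
  have hPmin : 0 < Pmin := lt_of_lt_of_le hrb hrP
  have h1' : (1 + ε) * u < u + o := lt_of_mul_lt_mul_right h1 hrb.le
  have key : (1 + ε) * Pmin * (u + o) < (u + o) * (Pmax + Pmin - rb) := by
    nlinarith [mul_le_mul_of_nonneg_right h1'.le (sub_nonneg.2 hrP)]
  refine ⟨key, ?_⟩
  have key2 : (1 + ε) * Pmin < Pmax + Pmin - rb := by
    refine lt_of_mul_lt_mul_right ?_ hT.le
    calc (1 + ε) * Pmin * (u + o) < (u + o) * (Pmax + Pmin - rb) := key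
    _ = (Pmax + Pmin - rb) * (u + o) := mul_comm _ _
  rw [div_sub_div_same, lt_div_iff₀ hPmin]
  nlinarith [key2]
end
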